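/- Let Π be the two-phase reach-avoid problem on transition system S = (X,U,F) with running cost g, associated with nonempty A₁, A₂ ⊆ X and G₀ : X → [0,∞], with total cost J. Let Π₂ be the reach-avoid problem associated with A₂ and G₀ with closed-loop performance L₂, μ₂ a memoryless controller, Π₁ the reach-avoid problem associated with A₁ and terminal cost L₂(·,μ₂) with closed-loop performance L₁, μ₁ a memoryless controller with single-valued stopping component, and μ the composed controller that applies μ₁ until its stopping signal first equals 1 and μ₂ thereafter. Then for every p ∈ X with L₁(p,μ₁) < ∞ and every (u,v,x) ∈ B_p(μ × S), it holds that J(u,v,x) ≤ L₁(p,μ₁). -/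

import Mathlib

open scoped ENNReal Classical

namespace TwoPhase

noncomputable section

variable {X U : Type*}

/-- The behaviour of the transition system `(X, U, F)` initialized at `p`:
`x 0 = p` and `x (t+1) ∈ F (x t) (u t)` for all `t`. -/
def Behaviour (F : X → U → Set X) (p : X) (u : ℕ → U) (x : ℕ → X) : Prop :=
  x 0 = p ∧ ∀ t, x (t + 1) ∈ F (x t) (u t)

/-- A general (history-dependent) controller, encoded as a map depending on the
time `t` and the full signals, required to be strict (nonempty valued) and causal:
its value at time `t` only depends on `x|[0;t]` and `u|[0;t)`. -/
def IsController (μ : ℕ → (ℕ → X) → (ℕ → U) → Set (U × Bool)) : Prop :=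
  (∀ t x u, (μ t x u).Nonempty) ∧
    ∀ (t : ℕ) (x x' : ℕ → X) (u u' : ℕ → U),
      (∀ s ≤ t, x s = x' s) → (∀ s < t, u s = u' s) → μ t x u = μ t x' u'

/-- The history-dependent controller induced by a memoryless controller. -/
def ofMemoryless (μ : X → Set (U × Bool)) : ℕ → (ℕ → X) → (ℕ → U) → Set (U × Bool) :=
  fun t x _ => μ (x t)

/-- The closed-loop behaviour `B_p(μ × S)`. -/
def ClosedLoop (F : X → U → Set X) (μ : ℕ → (ℕ → X) → (ℕ → U) → Set (U × Bool))
    (p : X) (u : ℕ → U) (v : ℕ → Bool) (x : ℕ → X) : Prop :=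
  Behaviour F p u x ∧ ∀ t, (u t, v t) ∈ μ t x u

/-- The total cost `J(u,v,x)` associated with running cost `g` and
trajectory cost `G` (where `G T x` is the cost of the finite trajectory `x|[0;T]`):
if `v` is not identically `0` and `T = min v⁻¹(1)`, it is
`∑_{t<T} g (x t) (x (t+1)) (u t) + G T x`; otherwise it is `∞`. -/
def totalCost (g : X → X → U → ℝ≥0∞) (G : ℕ → (ℕ → X) → ℝ≥0∞)
    (u : ℕ → U) (v : ℕ → Bool) (x : ℕ → X) : ℝ≥0∞ :=
  if h : ∃ t, v t = true then
    (∑ t ∈ Finset.range (Nat.find h), g (x t) (x (t + 1)) (u t)) + G (Nat.find h) x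
  else ⊤

/-- The closed-loop performance `L(p, μ)` of the optimal control problem
`(X, U, F, G, g)`. -/
def perf (F : X → U → Set X) (g : X → X → U → ℝ≥0∞) (G : ℕ → (ℕ → X) → ℝ≥0∞)
    (μ : ℕ → (ℕ → X) → (ℕ → U) → Set (U × Bool)) (p : X) : ℝ≥0∞ :=
  ⨆ (u : ℕ → U) (v : ℕ → Bool) (x : ℕ → X) (_ : ClosedLoop F μ p u v x),
    totalCost g G u v x

/-- The value function `V(p)` of the optimal control problem `(X, U, F, G, g)`. -/
def value (F : X → U → Set X) (g : X → X → U → ℝ≥0∞) (G : ℕ → (ℕ → X) → ℝ≥0∞)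
    (p : X) : ℝ≥0∞ :=
  ⨅ (μ : ℕ → (ℕ → X) → (ℕ → U) → Set (U × Bool)) (_ : IsController μ),
    perf F g G μ p

/-- The (terminal) trajectory cost of the reach-avoid problem associated with `A`
and `G₀`. -/
def reachAvoidCost (A : Set X) (G₀ : X → ℝ≥0∞) : ℕ → (ℕ → X) → ℝ≥0∞ :=
  fun T x => if x T ∈ A then G₀ (x T) else ⊤

/-- The trajectory cost of the two-phase reach-avoid problem associated with
`A₁`, `A₂` and `G₀`. -/
def twoPhaseCost (A₁ A₂ : Set X) (G₀ : X → ℝ≥0∞) : ℕ → (ℕ → X) → ℝ≥0∞ :=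
  fun t x => if (∃ s ≤ t, x s ∈ A₁) ∧ x t ∈ A₂ then G₀ (x t) else ⊤

/-- A trajectory cost which is a terminal cost `G : X → [0,∞]`. -/
def termCost (G : X → ℝ≥0∞) : ℕ → (ℕ → X) → ℝ≥0∞ := fun T x => G (x T)

/-- The stopping component of a memoryless controller is single-valued. -/
def SVStop (μ : X → Set (U × Bool)) : Prop :=
  ∀ q : X, (∀ w ∈ μ q, w.2 = false) ∨ (∀ w ∈ μ q, w.2 = true)

/-- The composed controller `μ` of Proposition 1: it plays `μ₁` as long as the
stopping signal `w` of `μ₁` along `x` satisfies `w s = 0` for all `s ∈ [0;t]`,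
and plays `μ₂` afterwards. -/
def composed (μ₁ μ₂ : X → Set (U × Bool)) :
    ℕ → (ℕ → X) → (ℕ → U) → Set (U × Bool) :=
  fun t x _ =>
    if ∀ s ≤ t, ∀ w ∈ μ₁ (x s), w.2 = false then μ₁ (x t) else μ₂ (x t)

/-- The refined controller `μ' ∘ Q` of a memoryless abstract controller `μ'`,
where `Q` is the quantizer: `(μ' ∘ Q) p = ⋃_{Ω ∈ X', p ∈ Ω} μ' Ω`. -/
def refineCtrl {XA : Set (Set X)} {UA : Set U} (μ' : ↥XA → Set (↥UA × Bool)) :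
    X → Set (U × Bool) :=
  fun p => ⋃ (Ω : ↥XA) (_ : p ∈ (Ω : Set X)),
    (fun w : ↥UA × Bool => ((w.1 : U), w.2)) '' μ' Ω

end

end TwoPhase

/-!
Let `T₁` be the first time at which `μ₁` signals to stop along `x`. If there is none, `(u,v,x)` is
a closed-loop run of `μ₁` that never stops, so `L₁(p,μ₁) = ∞`. Otherwise the run up to `T₁` is
played by `μ₁` and extends to a closed-loop run of `μ₁` stopping at `T₁`, whence
`∑_{t<T₁} g + L₂(x T₁, μ₂) ≤ L₁(p,μ₁)` as soon as `x T₁ ∈ A₁` (and `L₁(p,μ₁) = ∞` otherwise).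
From `T₁` on, the run shifted by `T₁` is a closed-loop run of `μ₂` from `x T₁`, and since `A₁`
has been visited at `T₁`, the two-phase cost of the whole run is `∑_{t<T₁} g` plus its
reach-avoid cost for `A₂`, which is at most `L₂(x T₁, μ₂)`.
-/

namespace TwoPhase

section

variable {X U : Type*} {F : X → U → Set X} {g : X → X → U → ℝ≥0∞} {G G' : ℕ → (ℕ → X) → ℝ≥0∞}
  {p : X} {u : ℕ → U} {v : ℕ → Bool} {x : ℕ → X} {T : ℕ}

section TotalCost

theorem totalCost_eq_of_first_true (hT : v T = true) (hlt : ∀ s < T, v s = false) :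
    totalCost g G u v x = (∑ t ∈ Finset.range T, g (x t) (x (t + 1)) (u t)) + G T x := by
  have h : ∃ t, v t = true := ⟨T, hT⟩
  have hfind : Nat.find h = T :=
    (Nat.find_eq_iff h).2 ⟨hT, fun s hs => by simp [hlt s hs]⟩
  rw [totalCost, dif_pos h, hfind]

theorem totalCost_eq_top (hv : ∀ t, v t = false) : totalCost g G u v x = ⊤ := by
  rw [totalCost, dif_neg]
  simp [hv]

theorem totalCost_eq_sum_add_totalCost_shift (hv : ∀ t < T, v t = false)
    (hG : ∀ k, G (T + k) x = G' k (fun t => x (T + t))) :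
    totalCost g G u v x = (∑ t ∈ Finset.range T, g (x t) (x (t + 1)) (u t)) +
      totalCost g G' (fun t => u (T + t)) (fun t => v (T + t)) (fun t => x (T + t)) := by
  by_cases h : ∃ t, v t = true
  · have hTle : T ≤ Nat.find h := by
      by_contra! hlt
      exact absurd (Nat.find_spec h) (by simp [hv _ hlt])
    obtain ⟨k, hk⟩ := Nat.exists_eq_add_of_le hTle
    have hvk : v (T + k) = true := hk ▸ Nat.find_spec h
    have hlt : ∀ s < T + k, v s = false := fun s hs => by
      simpa using Nat.find_min h (hk ▸ hs)
    rw [totalCost_eq_of_first_true hvk hlt,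
      totalCost_eq_of_first_true (T := k) hvk fun s hs => hlt _ (by omega),
      Finset.sum_range_add, add_assoc, hG]
    rfl
  · simp only [not_exists, Bool.not_eq_true] at h
    rw [totalCost_eq_top h, totalCost_eq_top fun t => h (T + t), add_top]

end TotalCost

section Perf

variable {μ : ℕ → (ℕ → X) → (ℕ → U) → Set (U × Bool)}

theorem totalCost_le_perf (hcl : ClosedLoop F μ p u v x) :
    totalCost g G u v x ≤ perf F g G μ p :=
  le_iSup_of_le u <| le_iSup_of_le v <| le_iSup_of_le x <| le_iSup_of_le hcl le_rfl

theorem perf_eq_top_of_closedLoop (hcl : ClosedLoop F μ p u v x) (hv : ∀ t, v t = false) :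
    perf F g G μ p = ⊤ :=
  top_le_iff.1 <| (totalCost_eq_top hv).symm.trans_le (totalCost_le_perf hcl)

end Perf

section Memoryless

variable {μ : X → Set (U × Bool)}

theorem exists_closedLoop_ofMemoryless (hF : ∀ x u, (F x u).Nonempty)
    (hμ : ∀ q, (μ q).Nonempty) (q : X) :
    ∃ u v x, ClosedLoop F (ofMemoryless μ) q u v x := by
  let next : X → X := fun y => (hF y (hμ y).some.1).some
  refine ⟨fun t => (hμ (next^[t] q)).some.1, fun t => (hμ (next^[t] q)).some.2,
    fun t => next^[t] q, ⟨rfl, fun t => ?_⟩, fun t => (hμ _).some_mem⟩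
  show next^[t + 1] q ∈ F (next^[t] q) _
  rw [Function.iterate_succ_apply']
  exact (hF _ _).some_mem

theorem exists_closedLoop_ofMemoryless_extending (hF : ∀ x u, (F x u).Nonempty)
    (hμ : ∀ q, (μ q).Nonempty) (hx0 : x 0 = p)
    (hstep : ∀ t < T, x (t + 1) ∈ F (x t) (u t)) (hmem : ∀ t < T, (u t, v t) ∈ μ (x t)) :
    ∃ u' v' x', ClosedLoop F (ofMemoryless μ) p u' v' x' ∧
      (∀ t ≤ T, x' t = x t) ∧ ∀ t < T, u' t = u t ∧ v' t = v t := by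
  obtain ⟨u₀, v₀, x₀, ⟨hx₀0, hx₀F⟩, hμ₀⟩ := exists_closedLoop_ofMemoryless hF hμ (x T)
  let x' : ℕ → X := fun t => if t ≤ T then x t else x₀ (t - T)
  have hx'_tail : ∀ t, T ≤ t → x' t = x₀ (t - T) := by
    intro t ht
    rcases ht.eq_or_lt with rfl | ht
    · simp [x', hx₀0]
    · simp [x', not_le.2 ht]
  refine ⟨fun t => if t < T then u t else u₀ (t - T), fun t => if t < T then v t else v₀ (t - T),
    x', ⟨⟨by simp [x', hx0], fun t => ?_⟩, fun t => ?_⟩, fun t ht => if_pos ht,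
    fun t ht => ⟨if_pos ht, if_pos ht⟩⟩
  · by_cases ht : t < T
    · simpa [x', ht, ht.le, Nat.succ_le_of_lt ht] using hstep t ht
    · rw [not_lt] at ht
      simp only [if_neg (not_lt.2 ht), hx'_tail t ht, hx'_tail (t + 1) (by omega),
        Nat.sub_add_comm ht]
      exact hx₀F (t - T)
  · by_cases ht : t < T
    · simpa [ofMemoryless, x', ht, ht.le] using hmem t ht
    · rw [not_lt] at ht
      simpa [ofMemoryless, not_lt.2 ht, hx'_tail t ht] using hμ₀ (t - T)

theorem closedLoop_ofMemoryless_shift (hx : Behaviour F p u x)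
    (hmem : ∀ t, T ≤ t → (u t, v t) ∈ μ (x t)) :
    ClosedLoop F (ofMemoryless μ) (x T) (fun t => u (T + t)) (fun t => v (T + t))
      (fun t => x (T + t)) :=
  ⟨⟨rfl, fun t => hx.2 (T + t)⟩, fun t => hmem (T + t) (Nat.le_add_right T t)⟩

theorem sum_add_reachAvoidCost_le_perf (hF : ∀ x u, (F x u).Nonempty)
    (hμ : ∀ q, (μ q).Nonempty) (A : Set X) (G₀ : X → ℝ≥0∞) (hx : Behaviour F p u x)
    (hmem : ∀ t < T, (u t, v t) ∈ μ (x t)) (hv : ∀ t < T, v t = false)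
    (hstop : ∀ w ∈ μ (x T), w.2 = true) :
    (∑ t ∈ Finset.range T, g (x t) (x (t + 1)) (u t)) + reachAvoidCost A G₀ T x ≤
      perf F g (reachAvoidCost A G₀) (ofMemoryless μ) p := by
  obtain ⟨u', v', x', hcl, hx', huv'⟩ :=
    exists_closedLoop_ofMemoryless_extending hF hμ hx.1 (fun t _ => hx.2 t) hmem
  have hv'T : v' T = true := by
    have h : (u' T, v' T) ∈ μ (x' T) := hcl.2 T
    exact hstop _ (hx' T le_rfl ▸ h)
  have hv'lt : ∀ t < T, v' t = false := fun t ht => (huv' t ht).2.trans (hv t ht)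
  have hsum : ∑ t ∈ Finset.range T, g (x' t) (x' (t + 1)) (u' t) =
      ∑ t ∈ Finset.range T, g (x t) (x (t + 1)) (u t) := by
    refine Finset.sum_congr rfl fun t ht => ?_
    rw [Finset.mem_range] at ht
    rw [hx' t ht.le, hx' (t + 1) ht, (huv' t ht).1]
  have hterm : reachAvoidCost A G₀ T x' = reachAvoidCost A G₀ T x := by
    simp only [reachAvoidCost, hx' T le_rfl]
  calc _ = totalCost g (reachAvoidCost A G₀) u' v' x' := by
        rw [totalCost_eq_of_first_true hv'T hv'lt, hsum, hterm]
    _ ≤ _ := totalCost_le_perf hcl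

theorem SVStop.forall_eq_true (hsv : SVStop μ) {q : X} (h : ∃ w ∈ μ q, w.2 = true) :
    ∀ w ∈ μ q, w.2 = true :=
  (hsv q).resolve_left fun hfalse => by
    obtain ⟨w, hw, hw2⟩ := h
    simp [hfalse w hw] at hw2

end Memoryless

section Composed

variable {μ₁ μ₂ : X → Set (U × Bool)} {t T₁ : ℕ}

theorem composed_eq_left (hlt : ∀ s < T₁, ∀ w ∈ μ₁ (x s), w.2 = false) (ht : t < T₁) :
    composed μ₁ μ₂ t x u = μ₁ (x t) :=
  if_pos fun s hs => hlt s (hs.trans_lt ht)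

theorem composed_eq_right (hT₁ : ∃ w ∈ μ₁ (x T₁), w.2 = true) (ht : T₁ ≤ t) :
    composed μ₁ μ₂ t x u = μ₂ (x t) := by
  refine if_neg fun h => ?_
  obtain ⟨w, hw, hw2⟩ := hT₁
  simp [h T₁ ht w hw] at hw2

theorem perf_eq_top_of_composed_never_stops (hcl : ClosedLoop F (composed μ₁ μ₂) p u v x)
    (hnever : ∀ t, ∀ w ∈ μ₁ (x t), w.2 = false) : perf F g G (ofMemoryless μ₁) p = ⊤ := by
  have hmem : ∀ t, (u t, v t) ∈ μ₁ (x t) := fun t =>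
    composed_eq_left (T₁ := t + 1) (fun s _ => hnever s) t.lt_succ_self ▸ hcl.2 t
  exact perf_eq_top_of_closedLoop ⟨hcl.1, hmem⟩ fun t => hnever t _ (hmem t)

theorem ClosedLoop.composed_phases (hcl : ClosedLoop F (composed μ₁ μ₂) p u v x)
    (hT₁ : ∃ w ∈ μ₁ (x T₁), w.2 = true) (hlt : ∀ s < T₁, ∀ w ∈ μ₁ (x s), w.2 = false) :
    (∀ t < T₁, (u t, v t) ∈ μ₁ (x t)) ∧ (∀ t < T₁, v t = false) ∧
      ∀ t, T₁ ≤ t → (u t, v t) ∈ μ₂ (x t) := by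
  have hphase₁ : ∀ t < T₁, (u t, v t) ∈ μ₁ (x t) := fun t ht =>
    composed_eq_left hlt ht ▸ hcl.2 t
  refine ⟨hphase₁, fun t ht => hlt t ht _ (hphase₁ t ht), fun t ht => ?_⟩
  exact composed_eq_right (μ₂ := μ₂) (u := u) hT₁ ht ▸ hcl.2 t

theorem twoPhaseCost_eq_reachAvoidCost {A₁ : Set X} (hA₁ : x T₁ ∈ A₁) (A₂ : Set X)
    (G₀ : X → ℝ≥0∞) (ht : T₁ ≤ t) : twoPhaseCost A₁ A₂ G₀ t x = reachAvoidCost A₂ G₀ t x := by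
  unfold twoPhaseCost reachAvoidCost
  by_cases hA₂ : x t ∈ A₂
  · rw [if_pos ⟨⟨T₁, ht, hA₁⟩, hA₂⟩, if_pos hA₂]
  · rw [if_neg fun h => hA₂ h.2, if_neg hA₂]

end Composed

end

theorem totalCost_le_of_closedLoop_general
    {X U : Type*}
    (F : X → U → Set X) (hF : ∀ x u, (F x u).Nonempty)
    (g : X → X → U → ℝ≥0∞) (G₀ : X → ℝ≥0∞)
    (A₁ A₂ : Set X)
    (μ₂ : X → Set (U × Bool))
    (μ₁ : X → Set (U × Bool)) (hμ₁ : ∀ q, (μ₁ q).Nonempty) (hsv : SVStop μ₁)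
    (p : X)
    (u : ℕ → U) (v : ℕ → Bool) (x : ℕ → X)
    (hcl : ClosedLoop F (composed μ₁ μ₂) p u v x) :
    totalCost g (twoPhaseCost A₁ A₂ G₀) u v x ≤
      perf F g
        (reachAvoidCost A₁
          (fun q => perf F g (reachAvoidCost A₂ G₀) (ofMemoryless μ₂) q))
        (ofMemoryless μ₁) p := by
  set L₂ : X → ℝ≥0∞ := fun q => perf F g (reachAvoidCost A₂ G₀) (ofMemoryless μ₂) q
  by_cases hstop : ∃ t, ∃ w ∈ μ₁ (x t), w.2 = true
  swap
  · simp only [not_exists, not_and, Bool.not_eq_true] at hstop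
    rw [perf_eq_top_of_composed_never_stops hcl hstop]
    exact le_top
  set T₁ := Nat.find hstop
  have hT₁ : ∃ w ∈ μ₁ (x T₁), w.2 = true := Nat.find_spec hstop
  obtain ⟨hphase₁, hv, hphase₂⟩ := hcl.composed_phases hT₁ fun t ht w hw => by
    simpa using fun h => Nat.find_min hstop ht ⟨w, hw, h⟩
  have hfirst := sum_add_reachAvoidCost_le_perf (g := g) hF hμ₁ A₁ L₂ hcl.1 hphase₁ hv
    (hsv.forall_eq_true hT₁)
  by_cases hA₁ : x T₁ ∈ A₁
  swap
  · rw [reachAvoidCost, if_neg hA₁, add_top, top_le_iff] at hfirst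
    exact hfirst ▸ le_top
  calc totalCost g (twoPhaseCost A₁ A₂ G₀) u v x
      = (∑ t ∈ Finset.range T₁, g (x t) (x (t + 1)) (u t)) + totalCost g (reachAvoidCost A₂ G₀)
          (fun t => u (T₁ + t)) (fun t => v (T₁ + t)) (fun t => x (T₁ + t)) :=
        totalCost_eq_sum_add_totalCost_shift hv fun k =>
          twoPhaseCost_eq_reachAvoidCost hA₁ A₂ G₀ (Nat.le_add_right T₁ k)
    _ ≤ (∑ t ∈ Finset.range T₁, g (x t) (x (t + 1)) (u t)) + L₂ (x T₁) :=
        add_le_add le_rfl (totalCost_le_perf (closedLoop_ofMemoryless_shift hcl.1 hphase₂))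
    _ = (∑ t ∈ Finset.range T₁, g (x t) (x (t + 1)) (u t)) + reachAvoidCost A₁ L₂ T₁ x := by
        rw [reachAvoidCost, if_pos hA₁]
    _ ≤ _ := hfirst

/-- first step of the proof of Proposition 1.  With `Π`,
`Π₁`, `Π₂`, `μ₁`, `μ₂` and the composed controller `μ` as in Proposition 1,
for every `p ∈ X` with `L₁(p,μ₁) < ∞` and every closed-loop signal
`(u,v,x) ∈ B_p(μ × S)` it holds that `J(u,v,x) ≤ L₁(p,μ₁)`. -/
theorem totalCost_le_of_closedLoop
    {X U : Type*} [Nonempty X] [Nonempty U]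
    (F : X → U → Set X) (hF : ∀ x u, (F x u).Nonempty)
    (g : X → X → U → ℝ≥0∞) (G₀ : X → ℝ≥0∞)
    (A₁ A₂ : Set X) (hA₁ : A₁.Nonempty) (hA₂ : A₂.Nonempty)
    (μ₂ : X → Set (U × Bool)) (hμ₂ : ∀ q, (μ₂ q).Nonempty)
    (μ₁ : X → Set (U × Bool)) (hμ₁ : ∀ q, (μ₁ q).Nonempty) (hsv : SVStop μ₁)
    (p : X)
    (hfin : perf F g
        (reachAvoidCost A₁
          (fun q => perf F g (reachAvoidCost A₂ G₀) (ofMemoryless μ₂) q))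
        (ofMemoryless μ₁) p < ⊤)
    (u : ℕ → U) (v : ℕ → Bool) (x : ℕ → X)
    (hcl : ClosedLoop F (composed μ₁ μ₂) p u v x) :
    totalCost g (twoPhaseCost A₁ A₂ G₀) u v x ≤
      perf F g
        (reachAvoidCost A₁
          (fun q => perf F g (reachAvoidCost A₂ G₀) (ofMemoryless μ₂) q))
        (ofMemoryless μ₁) p :=
  totalCost_le_of_closedLoop_general F hF g G₀ A₁ A₂ μ₂ μ₁ hμ₁ hsv p u v x hcl

end TwoPhase
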